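/- arXiv:1103.6065 — 6 statements merged into one kernel-verified Lean document; each statement's English description precedes it below -/
import Mathlib

section
/- Let Y, A, B be real Banach spaces and let α : Y → A and β : Y → B be bounded linear operators with α an isometric embedding (‖α(y)‖ = ‖y‖ for all y) and ‖β‖ ≤ 1. Then the canonical map α' : B → PO(α,β) into the push-out, given by α'(b) = (0,b) + Δ, is an isometric embedding; equivalently, for every b ∈ B one has inf_{y ∈ Y} ( ‖α(y)‖ + ‖b − β(y)‖ ) = ‖b‖. -/
/-!
Every element `(α y, -β y)` of `Δ` satisfies `‖β y‖ ≤ ‖α y‖`, and this closed condition passes to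
the closure of `Δ`. Hence any representative `(a, b')` of the class of `(0, b)` has
`‖b - b'‖ ≤ ‖a‖`, so its norm `‖a‖ + ‖b'‖` is at least `‖b‖` by the triangle inequality, while
`(0, b)` itself has norm `‖b‖`.
-/

open scoped ENNReal

variable (Y A B : Type*)
  [NormedAddCommGroup Y] [NormedSpace ℝ Y] [CompleteSpace Y]
  [NormedAddCommGroup A] [NormedSpace ℝ A] [CompleteSpace A]
  [NormedAddCommGroup B] [NormedSpace ℝ B] [CompleteSpace B]

/-- The subspace `Δ = {(α y, -β y) : y ∈ Y}` inside `A ⊕₁ B`. -/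
noncomputable def pushoutDelta (α : Y →L[ℝ] A) (β : Y →L[ℝ] B) :
    Submodule ℝ (WithLp 1 (A × B)) :=
  LinearMap.range ((WithLp.linearEquiv 1 ℝ (A × B)).symm.toLinearMap ∘ₗ
    LinearMap.prod (α : Y →ₗ[ℝ] A) (-(β : Y →ₗ[ℝ] B)))

/-- The push-out `PO(α,β) = (A ⊕₁ B)/cl(Δ)` with the quotient norm. -/
noncomputable def pushout (α : Y →L[ℝ] A) (β : Y →L[ℝ] B) : Type _ :=
  WithLp 1 (A × B) ⧸ (pushoutDelta Y A B α β).topologicalClosure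

noncomputable instance (α : Y →L[ℝ] A) (β : Y →L[ℝ] B) :
    NormedAddCommGroup (pushout Y A B α β) :=
  @Submodule.Quotient.normedAddCommGroup _ _ _ _ _
    (pushoutDelta Y A B α β).topologicalClosure
    (Submodule.isClosed_topologicalClosure _)

noncomputable instance (α : Y →L[ℝ] A) (β : Y →L[ℝ] B) :
    NormedSpace ℝ (pushout Y A B α β) :=
  Submodule.Quotient.normedSpace _ ℝ

/-- The canonical map `α' : B → PO(α,β)`, `b ↦ (0,b) + cl(Δ)`. -/
noncomputable def pushoutInr (α : Y →L[ℝ] A) (β : Y →L[ℝ] B) :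
    B →ₗ[ℝ] pushout Y A B α β :=
  ((pushoutDelta Y A B α β).topologicalClosure.mkQ) ∘ₗ
    (WithLp.linearEquiv 1 ℝ (A × B)).symm.toLinearMap ∘ₗ LinearMap.inr ℝ A B

section WithLpProd

variable {R E F : Type*} [Ring R] [SeminormedAddCommGroup E] [Module R E]
  [SeminormedAddCommGroup F] [Module R F]

lemma WithLp.isClosed_setOf_norm_snd_le_norm_fst :
    IsClosed {v : WithLp 1 (E × F) | ‖v.snd‖ ≤ ‖v.fst‖} :=
  isClosed_le (WithLp.continuous_snd 1 E F).norm (WithLp.continuous_fst 1 E F).norm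

lemma WithLp.norm_snd_le_norm_fst_of_mem_closure {S : Set (WithLp 1 (E × F))}
    (hS : ∀ v ∈ S, ‖v.snd‖ ≤ ‖v.fst‖) : ∀ v ∈ closure S, ‖v.snd‖ ≤ ‖v.fst‖ :=
  fun _ hv => closure_minimal hS WithLp.isClosed_setOf_norm_snd_le_norm_fst hv

lemma Submodule.norm_mk_toLp_zero_left {S : Submodule R (WithLp 1 (E × F))}
    (hS : ∀ v ∈ S, ‖v.snd‖ ≤ ‖v.fst‖) (b : F) :
    ‖(Submodule.Quotient.mk (WithLp.toLp 1 ((0 : E), b)) : WithLp 1 (E × F) ⧸ S)‖ = ‖b‖ := by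
  refine le_antisymm ((Submodule.Quotient.norm_mk_le S _).trans_eq ?_)
    (QuotientAddGroup.le_norm_iff.2 fun m hm => ?_)
  · simp
  have hmem : WithLp.toLp 1 ((0 : E), b) - m ∈ S := (Submodule.Quotient.eq S).1 hm.symm
  have hcontr := hS _ hmem
  simp only [WithLp.sub_fst, WithLp.sub_snd, WithLp.toLp_fst, WithLp.toLp_snd, zero_sub,
    norm_neg] at hcontr
  calc ‖b‖ ≤ ‖m.snd‖ + ‖b - m.snd‖ := norm_le_norm_add_norm_sub' b m.snd
    _ ≤ ‖m.fst‖ + ‖m.snd‖ := by linarith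
    _ = ‖m‖ := (WithLp.prod_norm_eq_of_L1 m).symm

end WithLpProd

/-- If `α` is an isometric embedding and `‖β‖ ≤ 1`, then the canonical map
`α' : B → PO(α,β)` is an isometric embedding; equivalently,
`inf_{y ∈ Y} (‖α y‖ + ‖b − β y‖) = ‖b‖` for every `b ∈ B`. -/
theorem pushoutInr_isometry (α : Y →L[ℝ] A) (β : Y →L[ℝ] B)
    (hα : ∀ y : Y, ‖α y‖ = ‖y‖) (hβ : ‖β‖ ≤ 1) :
    (∀ b : B, ‖pushoutInr Y A B α β b‖ = ‖b‖) ∧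
      (∀ b : B, (⨅ y : Y, (‖α y‖ + ‖b - β y‖)) = ‖b‖) := by
  have hβα (y : Y) : ‖β y‖ ≤ ‖α y‖ :=
    (β.le_of_opNorm_le hβ y).trans_eq ((one_mul _).trans (hα y).symm)
  have hΔ : ∀ v ∈ pushoutDelta Y A B α β, ‖v.snd‖ ≤ ‖v.fst‖ := by
    rintro _ ⟨y, rfl⟩
    simpa using hβα y
  refine ⟨Submodule.norm_mk_toLp_zero_left
    (WithLp.norm_snd_le_norm_fst_of_mem_closure hΔ), fun b => ?_⟩
  refine IsLeast.csInf_eq ⟨⟨0, by simp⟩, ?_⟩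
  rintro _ ⟨y, rfl⟩
  calc ‖b‖ ≤ ‖β y‖ + ‖b - β y‖ := norm_le_norm_add_norm_sub' b (β y)
    _ ≤ ‖α y‖ + ‖b - β y‖ := by gcongr; exact hβα y
end

section
/- Let Y, A, B be real Banach spaces and let α : Y → A and β : Y → B be bounded linear operators such that ‖β‖ ≤ 1 and α is an isomorphism (a bijective bounded linear map with bounded inverse). Then the canonical map α' : B → PO(α,β) is an isomorphism of B onto the push-out PO(α,β), and ‖(α')⁻¹‖ ≤ max{1, ‖α⁻¹‖}. -/
open scoped ENNReal

variable (Y A B : Type*)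
  [NormedAddCommGroup Y] [NormedSpace ℝ Y] [CompleteSpace Y]
  [NormedAddCommGroup A] [NormedSpace ℝ A] [CompleteSpace A]
  [NormedAddCommGroup B] [NormedSpace ℝ B] [CompleteSpace B]

noncomputable instance (α : Y →L[ℝ] A) (β : Y →L[ℝ] B) :
    CompleteSpace (pushout Y A B α β) :=
  Submodule.Quotient.completeSpace _

/-! Compatible maps `f : A → Z`, `g : B → Z` (`f ∘ α = g ∘ β`) induce `(a, b) ↦ f a + g b` on the
push-out, of norm at most `max ‖f‖ ‖g‖` because `A ⊕₁ B` carries the `ℓ¹` norm. For `f = β ∘ α⁻¹`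
and `g = id` this is a left inverse of `α'`, and `α'` is onto since `(a, b) ≡ (0, b + β (α⁻¹ a))`
modulo `Δ`; so it is the inverse of `α'`, of norm at most `max ‖β ∘ α⁻¹‖ 1 ≤ max ‖α⁻¹‖ 1`. -/

theorem Submodule.norm_liftQL_le {𝕜 E F : Type*} [NontriviallyNormedField 𝕜]
    [SeminormedAddCommGroup E] [NormedSpace 𝕜 E] [SeminormedAddCommGroup F] [NormedSpace 𝕜 F]
    (S : Submodule 𝕜 E) (f : E →L[𝕜] F) (h : S ≤ f.ker) : ‖S.liftQL f h‖ ≤ ‖f‖ := by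
  set f' := f.toLinearMap.toAddMonoidHom.mkNormedAddGroupHom ‖f‖ f.le_opNorm
  refine ContinuousLinearMap.opNorm_le_bound _ (norm_nonneg f) fun x => ?_
  calc ‖S.liftQL f h x‖ ≤ ‖f'‖ * ‖x‖ :=
        QuotientAddGroup.norm_lift_apply_le f' (fun y hy => h hy) x
    _ ≤ ‖f‖ * ‖x‖ := by
        gcongr
        exact AddMonoidHom.mkNormedAddGroupHom_norm_le _ (norm_nonneg f) _

theorem WithLp.norm_comp_fstL_add_comp_sndL_le {𝕜 E F G : Type*} [NontriviallyNormedField 𝕜]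
    [SeminormedAddCommGroup E] [NormedSpace 𝕜 E] [SeminormedAddCommGroup F] [NormedSpace 𝕜 F]
    [SeminormedAddCommGroup G] [NormedSpace 𝕜 G] (f : E →L[𝕜] G) (g : F →L[𝕜] G) :
    ‖f ∘L WithLp.fstL 1 𝕜 E F + g ∘L WithLp.sndL 1 𝕜 E F‖ ≤ max ‖f‖ ‖g‖ := by
  refine ContinuousLinearMap.opNorm_le_bound _ (by positivity) fun x => ?_
  calc ‖f x.fst + g x.snd‖ ≤ ‖f‖ * ‖x.fst‖ + ‖g‖ * ‖x.snd‖ :=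
        norm_add_le_of_le (f.le_opNorm _) (g.le_opNorm _)
    _ ≤ max ‖f‖ ‖g‖ * ‖x.fst‖ + max ‖f‖ ‖g‖ * ‖x.snd‖ := by gcongr <;> simp
    _ = max ‖f‖ ‖g‖ * ‖x‖ := by rw [WithLp.prod_norm_eq_of_L1, mul_add]

section

variable {Y A B Z : Type*} [NormedAddCommGroup Y] [NormedSpace ℝ Y]
  [NormedAddCommGroup A] [NormedSpace ℝ A] [NormedAddCommGroup B] [NormedSpace ℝ B]
  [NormedAddCommGroup Z] [NormedSpace ℝ Z] {α : Y →L[ℝ] A} {β : Y →L[ℝ] B}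

theorem pushoutDelta_closure_le_ker (f : A →L[ℝ] Z) (g : B →L[ℝ] Z) (h : f ∘L α = g ∘L β) :
    (pushoutDelta Y A B α β).topologicalClosure ≤
      (f ∘L WithLp.fstL 1 ℝ A B + g ∘L WithLp.sndL 1 ℝ A B).ker := by
  refine Submodule.topologicalClosure_minimal _ ?_ (ContinuousLinearMap.isClosed_ker _)
  rintro _ ⟨y, rfl⟩
  simpa [← sub_eq_add_neg, sub_eq_zero] using congr($h y)

theorem pushoutInr_apply (b : B) :
    pushoutInr Y A B α β b = Submodule.Quotient.mk (WithLp.toLp 1 ((0 : A), b)) :=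
  rfl

noncomputable def pushoutDesc (f : A →L[ℝ] Z) (g : B →L[ℝ] Z) (h : f ∘L α = g ∘L β) :
    pushout Y A B α β →L[ℝ] Z :=
  (pushoutDelta Y A B α β).topologicalClosure.liftQL _ (pushoutDelta_closure_le_ker f g h)

theorem pushoutDesc_pushoutInr (f : A →L[ℝ] Z) (g : B →L[ℝ] Z) (h : f ∘L α = g ∘L β) (b : B) :
    pushoutDesc f g h (pushoutInr Y A B α β b) = g b := by
  change (f ∘L WithLp.fstL 1 ℝ A B + g ∘L WithLp.sndL 1 ℝ A B) (WithLp.toLp 1 (0, b)) = g b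
  simp

theorem norm_pushoutDesc_le (f : A →L[ℝ] Z) (g : B →L[ℝ] Z) (h : f ∘L α = g ∘L β) :
    ‖pushoutDesc f g h‖ ≤ max ‖f‖ ‖g‖ :=
  (Submodule.norm_liftQL_le _ _ _).trans (WithLp.norm_comp_fstL_add_comp_sndL_le f g)

variable (α β) in
noncomputable def pushoutInrL : B →L[ℝ] pushout Y A B α β :=
  (pushoutInr Y A B α β).mkContinuous 1 fun b => by
    rw [one_mul, pushoutInr_apply]
    exact (Submodule.Quotient.norm_mk_le _ _).trans_eq (WithLp.norm_toLp_snd _ _ _ _)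

theorem pushoutInr_surjective (hα : Function.Surjective α) :
    Function.Surjective (pushoutInr Y A B α β) := by
  rintro ⟨x⟩
  obtain ⟨y, hy⟩ := hα x.fst
  refine ⟨x.snd + β y, (Submodule.Quotient.eq _).mpr (Submodule.le_topologicalClosure _ ⟨-y, ?_⟩)⟩
  apply WithLp.ofLp_injective
  ext <;> simp [hy]

end

/-- If `‖β‖ ≤ 1` and `α` is an isomorphism, then the canonical map
`α' : B → PO(α,β)` is an isomorphism onto the push-out, with
`‖(α')⁻¹‖ ≤ max {1, ‖α⁻¹‖}`. -/
theorem pushoutInr_isomorphism (α : Y ≃L[ℝ] A) (β : Y →L[ℝ] B) (hβ : ‖β‖ ≤ 1) :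
    ∃ e : B ≃L[ℝ] pushout Y A B (α : Y →L[ℝ] A) β,
      (∀ b : B, e b = pushoutInr Y A B (α : Y →L[ℝ] A) β b) ∧
        ‖(e.symm : pushout Y A B (α : Y →L[ℝ] A) β →L[ℝ] B)‖ ≤
          max 1 ‖(α.symm : A →L[ℝ] Y)‖ := by
  set f : A →L[ℝ] B := β ∘L (α.symm : A →L[ℝ] Y)
  have hf : f ∘L (α : Y →L[ℝ] A) = ContinuousLinearMap.id ℝ B ∘L β := by ext; simp [f]
  have hleft : Function.LeftInverse (pushoutDesc f _ hf) (pushoutInrL (α : Y →L[ℝ] A) β) :=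
    pushoutDesc_pushoutInr f _ hf
  have hright := hleft.rightInverse_of_surjective (pushoutInr_surjective α.surjective)
  refine ⟨.equivOfInverse _ _ hleft hright, fun b => rfl, ?_⟩
  rw [ContinuousLinearEquiv.symm_equivOfInverse, max_comm]
  calc ‖pushoutDesc f _ hf‖ ≤ max ‖f‖ ‖ContinuousLinearMap.id ℝ B‖ := norm_pushoutDesc_le f _ hf
    _ ≤ max ‖(α.symm : A →L[ℝ] Y)‖ 1 := by
      refine max_le_max ?_ ContinuousLinearMap.norm_id_le
      calc ‖f‖ ≤ ‖β‖ * ‖(α.symm : A →L[ℝ] Y)‖ := ContinuousLinearMap.opNorm_comp_le _ _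
        _ ≤ ‖(α.symm : A →L[ℝ] Y)‖ := mul_le_of_le_one_left (norm_nonneg _) hβ
end

section
/- If U is a real Banach space of universal disposition for separable spaces, then every dense subset of U has cardinality at least the continuum 𝔠; that is, the density character of U is at least 𝔠. -/
open Cardinal

/-- A real Banach space `U` is of universal disposition for separable spaces if for every
pair of separable real Banach spaces `A` and `B`, every linear isometric embedding
`u : A → U` and every linear isometric embedding `j : A → B`, there is a linear isometric
embedding `u' : B → U` with `u' ∘ j = u`. -/
def UnivDispSeparable (U : Type*) [NormedAddCommGroup U] [NormedSpace ℝ U] : Prop :=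
  ∀ (A B : Type) [NormedAddCommGroup A] [NormedSpace ℝ A] [CompleteSpace A]
    [TopologicalSpace.SeparableSpace A]
    [NormedAddCommGroup B] [NormedSpace ℝ B] [CompleteSpace B]
    [TopologicalSpace.SeparableSpace B]
    (u : A →ₗᵢ[ℝ] U) (j : A →ₗᵢ[ℝ] B),
    ∃ u' : B →ₗᵢ[ℝ] U, ∀ a : A, u' (j a) = u a

/-!
Let `c₀ ⊆ ℓ∞` be the closed span of the unit vectors `eₙ`, and for `S ⊆ ℕ` let `B_S` be the closed
span of `c₀` and the indicator `1_S`; both are separable. Embed `c₀` into `U` by some `u` and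
extend `u` along `c₀ ⊆ B_S` for every `S`; let `x_S ∈ U` be the image of `1_S`. Then
`‖x_S + u eₙ‖ = ‖1_S + eₙ‖`, which is `2` if `n ∈ S` and `1` otherwise, so `‖x_S - x_T‖ ≥ 1`
whenever `S ≠ T`. A dense set must meet the `1/2`-balls around these `𝔠` points, which are disjoint.
-/

open scoped lp ENNReal
open TopologicalSpace

universe u v

theorem Dense.lift_mk_le_of_pairwise_le_dist {X : Type u} [PseudoMetricSpace X] {D : Set X}
    (hD : Dense D) {ι : Type v} {f : ι → X} {ε : ℝ} (hε : 0 < ε)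
    (hf : Pairwise fun i j => ε ≤ dist (f i) (f j)) : lift.{u} #ι ≤ lift.{v} #D := by
  choose d hdD hd using fun i => hD.exists_dist_lt (f i) (half_pos hε)
  refine lift_mk_le'.mpr ⟨⟨fun i => ⟨d i, hdD i⟩, fun i j hij => ?_⟩⟩
  by_contra hne
  have hdij : d i = d j := congrArg Subtype.val hij
  have hclose : dist (f i) (f j) < ε :=
    calc dist (f i) (f j) ≤ dist (f i) (d i) + dist (f j) (d i) := dist_triangle_right _ _ _
      _ < ε / 2 + ε / 2 := add_lt_add (hd i) (hdij ▸ hd j)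
      _ = ε := add_halves ε
  exact (hf hne).not_gt hclose

section ClosedSpan

variable {𝕜 E : Type*} [NormedField 𝕜] [SeparableSpace 𝕜] [SeminormedAddCommGroup E]
  [NormedSpace 𝕜 E]

theorem Submodule.separableSpace_topologicalClosure_span {s : Set E} (hs : s.Countable) :
    SeparableSpace (Submodule.span 𝕜 s).topologicalClosure := by
  have : IsSeparable ((Submodule.span 𝕜 s).topologicalClosure : Set E) := by
    rw [Submodule.topologicalClosure_coe]
    exact hs.isSeparable.span.closure
  exact this.separableSpace

end ClosedSpan

def Submodule.inclusionₗᵢ {R E : Type*} [Ring R] [SeminormedAddCommGroup E] [Module R E]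
    {p q : Submodule R E} (h : p ≤ q) : p →ₗᵢ[R] q :=
  { Submodule.inclusion h with norm_map' := fun _ => rfl }

def LinearIsometry.ofSubsingleton {R E F : Type*} [Semiring R] [SeminormedAddCommGroup E]
    [SeminormedAddCommGroup F] [Module R E] [Module R F] [Subsingleton E] : E →ₗᵢ[R] F :=
  { (0 : E →ₗ[R] F) with norm_map' := fun x => by simp [Subsingleton.elim x 0] }

noncomputable def lpIndicator (S : Set ℕ) : ℓ^∞(ℕ, ℝ) :=
  ⟨S.indicator 1, memℓp_infty ⟨1, by
    rintro _ ⟨i, rfl⟩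
    simpa using norm_indicator_le_norm_self (s := S) (f := (1 : ℕ → ℝ)) (a := i)⟩⟩

theorem lpIndicator_apply (S : Set ℕ) (i : ℕ) : lpIndicator S i = S.indicator 1 i := rfl

theorem two_le_norm_lpIndicator_add_singleton {S : Set ℕ} {n : ℕ} (hn : n ∈ S) :
    2 ≤ ‖lpIndicator S + lpIndicator {n}‖ := by
  simpa [lpIndicator_apply, hn, one_add_one_eq_two] using
    lp.norm_apply_le_norm ENNReal.top_ne_zero (lpIndicator S + lpIndicator {n}) n

theorem norm_lpIndicator_add_singleton_le_one {S : Set ℕ} {n : ℕ} (hn : n ∉ S) :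
    ‖lpIndicator S + lpIndicator {n}‖ ≤ 1 := by
  refine lp.norm_le_of_forall_le zero_le_one fun i => ?_
  simp only [lp.coeFn_add, Pi.add_apply, lpIndicator_apply]
  by_cases hi : i = n
  · subst hi; simp [hn]
  · by_cases hiS : i ∈ S <;> simp [hi, hiS]

noncomputable def cZero : Submodule ℝ ℓ^∞(ℕ, ℝ) :=
  (Submodule.span ℝ (Set.range fun n => lpIndicator {n})).topologicalClosure

noncomputable def cZeroAdjoin (S : Set ℕ) : Submodule ℝ ℓ^∞(ℕ, ℝ) :=
  (Submodule.span ℝ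
    (insert (lpIndicator S) (Set.range fun n => lpIndicator {n}))).topologicalClosure

instance : CompleteSpace cZero :=
  Submodule.topologicalClosure.completeSpace _

instance (S : Set ℕ) : CompleteSpace (cZeroAdjoin S) :=
  Submodule.topologicalClosure.completeSpace _

instance : SeparableSpace cZero :=
  Submodule.separableSpace_topologicalClosure_span (Set.countable_range _)

instance (S : Set ℕ) : SeparableSpace (cZeroAdjoin S) :=
  Submodule.separableSpace_topologicalClosure_span ((Set.countable_range _).insert _)

theorem cZero_le_cZeroAdjoin (S : Set ℕ) : cZero ≤ cZeroAdjoin S :=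
  Submodule.topologicalClosure_mono (Submodule.span_mono (Set.subset_insert _ _))

theorem lpIndicator_singleton_mem_cZero (n : ℕ) : lpIndicator {n} ∈ cZero :=
  Submodule.le_topologicalClosure _ (Submodule.subset_span ⟨n, rfl⟩)

theorem lpIndicator_mem_cZeroAdjoin (S : Set ℕ) : lpIndicator S ∈ cZeroAdjoin S :=
  Submodule.le_topologicalClosure _ (Submodule.subset_span (Set.mem_insert _ _))

theorem pairwise_one_le_dist_of_norm_add_eq {U : Type*} [SeminormedAddCommGroup U]
    {u : cZero → U} {x : Set ℕ → U}
    (hx : ∀ S (a : cZero), ‖x S + u a‖ = ‖lpIndicator S + a‖) :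
    Pairwise fun S T => 1 ≤ dist (x S) (x T) := by
  have key : ∀ {S T : Set ℕ} {n : ℕ}, n ∈ S → n ∉ T → 1 ≤ dist (x S) (x T) := by
    intro S T n hS hT
    let a : cZero := ⟨lpIndicator {n}, lpIndicator_singleton_mem_cZero n⟩
    calc (1 : ℝ) = 2 - 1 := by norm_num
      _ ≤ ‖x S + u a‖ - ‖x T + u a‖ := by
        rw [hx, hx]
        exact sub_le_sub (two_le_norm_lpIndicator_add_singleton hS)
          (norm_lpIndicator_add_singleton_le_one hT)
      _ ≤ ‖(x S + u a) - (x T + u a)‖ := norm_sub_norm_le _ _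
      _ = dist (x S) (x T) := by rw [add_sub_add_right_eq_sub, dist_eq_norm]
  intro S T hST
  obtain ⟨n, ⟨hS, hT⟩ | ⟨hT, hS⟩⟩ := Set.symmDiff_nonempty.mpr hST
  · exact key hS hT
  · exact dist_comm (x S) (x T) ▸ key hT hS

section

variable {U : Type*} [NormedAddCommGroup U] [NormedSpace ℝ U]

theorem UnivDispSeparable.nonempty_linearIsometry (hU : UnivDispSeparable U) (B : Type)
    [NormedAddCommGroup B] [NormedSpace ℝ B] [CompleteSpace B] [SeparableSpace B] :
    Nonempty (B →ₗᵢ[ℝ] U) :=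
  let ⟨u, _⟩ := hU PUnit B LinearIsometry.ofSubsingleton LinearIsometry.ofSubsingleton
  ⟨u⟩

theorem UnivDispSeparable.exists_norm_add_eq (hU : UnivDispSeparable U) :
    ∃ (u : cZero → U) (x : Set ℕ → U), ∀ S (a : cZero), ‖x S + u a‖ = ‖lpIndicator S + a‖ := by
  obtain ⟨u⟩ := hU.nonempty_linearIsometry cZero
  choose v hv using fun S =>
    hU cZero (cZeroAdjoin S) u (Submodule.inclusionₗᵢ (cZero_le_cZeroAdjoin S))
  refine ⟨u, fun S => v S ⟨lpIndicator S, lpIndicator_mem_cZeroAdjoin S⟩, fun S a => ?_⟩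
  rw [← hv S a, ← map_add, LinearIsometry.norm_map]
  rfl

end

theorem dense_ge_continuum_of_univDispSeparable_general (U : Type*)
    [NormedAddCommGroup U] [NormedSpace ℝ U]
    (hU : UnivDispSeparable U) :
    ∀ D : Set U, Dense D → Cardinal.continuum ≤ #D := by
  intro D hD
  obtain ⟨u, x, hx⟩ := hU.exists_norm_add_eq
  simpa [mk_set, two_power_aleph0] using
    hD.lift_mk_le_of_pairwise_le_dist one_pos (pairwise_one_le_dist_of_norm_add_eq hx)

/-- A Banach space of universal disposition for separable spaces has density character
at least the continuum: every dense subset has cardinality at least `𝔠`. -/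
theorem dense_ge_continuum_of_univDispSeparable (U : Type*)
    [NormedAddCommGroup U] [NormedSpace ℝ U] [CompleteSpace U]
    (hU : UnivDispSeparable U) :
    ∀ D : Set U, Dense D → Cardinal.continuum ≤ #D :=
  dense_ge_continuum_of_univDispSeparable_general U hU
end

section
/- Every real Banach space of universal disposition for separable spaces is 1-separably injective: for every separable real Banach space X, every closed subspace Y ⊆ X, and every bounded linear operator t : Y → E, there exists a bounded linear extension T : X → E with ‖T‖ ≤ ‖t‖. -/
/-!
After scaling we may assume `‖t‖ ≤ 1`. Let `Z` be the closure of `t(Y)` in `E`, a separable Banach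
space, and form the pushout `P = (X ⊕₁ Z) / {(y, -t y) | y ∈ Y}` of `Y ↪ X` and `t : Y → Z`.
Since `t` is a contraction, `Z` embeds isometrically into `P`, while `X → P` is a contraction that
agrees with `t` on `Y`. As `P` is separable, universal disposition extends the inclusion `Z ↪ E`
along `Z ↪ P` to an isometry `P → E`, and its composite with `X → P` is the required extension.
-/

open TopologicalSpace

lemma small_of_separableSpace (α : Type*) [MetricSpace α] [SeparableSpace α] : Small.{0} α :=
  small_of_injective (kuratowskiEmbedding.isometry α).injective

theorem exists_linearIsometryEquiv_of_separableSpace (F : Type*) [NormedAddCommGroup F]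
    [NormedSpace ℝ F] [CompleteSpace F] [SeparableSpace F] :
    ∃ (Z : Type) (_ : NormedAddCommGroup Z) (_ : NormedSpace ℝ Z) (_ : CompleteSpace Z)
      (_ : SeparableSpace Z), Nonempty (Z ≃ₗᵢ[ℝ] F) := by
  have := small_of_separableSpace F
  let e : Shrink.{0} F ≃ₗᵢ[ℝ] F := ⟨Shrink.linearEquiv ℝ F, fun _ => rfl⟩
  exact ⟨Shrink.{0} F, inferInstance, inferInstance, e.toIsometryEquiv.completeSpace,
    e.symm.surjective.denseRange.separableSpace e.symm.continuous, ⟨e⟩⟩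

/-- `Z` is the closure of the range of `t`, moved to `Type` so that it can serve as the space `A`
in `UnivDispSeparable`. -/
theorem ContinuousLinearMap.exists_linearIsometry_comp_eq {Y E : Type*} [NormedAddCommGroup Y]
    [NormedSpace ℝ Y] [SeparableSpace Y] [NormedAddCommGroup E] [NormedSpace ℝ E]
    [CompleteSpace E] (t : Y →L[ℝ] E) :
    ∃ (Z : Type) (_ : NormedAddCommGroup Z) (_ : NormedSpace ℝ Z) (_ : CompleteSpace Z)
      (_ : SeparableSpace Z) (s : Y →L[ℝ] Z) (u : Z →ₗᵢ[ℝ] E), ∀ y, u (s y) = t y := by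
  let R := LinearMap.range (t : Y →ₗ[ℝ] E)
  let F := R.topologicalClosure
  have : CompleteSpace F := R.isClosed_topologicalClosure.completeSpace_coe
  have : SeparableSpace F := by
    refine IsSeparable.separableSpace ?_
    rw [R.topologicalClosure_coe, LinearMap.coe_range]
    exact (isSeparable_range t.continuous).closure
  obtain ⟨Z, _, _, _, _, ⟨e⟩⟩ := exists_linearIsometryEquiv_of_separableSpace F
  have hF (y : Y) : t y ∈ F := R.le_topologicalClosure (LinearMap.mem_range_self _ y)
  exact ⟨Z, _, _, ‹_›, ‹_›, (e.symm : F →L[ℝ] Z).comp (t.codRestrict F hF),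
    F.subtypeₗᵢ.comp e.toLinearIsometry, fun y => by simp⟩

lemma WithLp.norm_toLp_one_prod {X Z : Type*} [SeminormedAddCommGroup X]
    [SeminormedAddCommGroup Z] (x : X) (z : Z) : ‖WithLp.toLp 1 (x, z)‖ = ‖x‖ + ‖z‖ := by
  simp [WithLp.prod_norm_eq_of_L1]

namespace BanachPushout

variable {X Z : Type*} [NormedAddCommGroup X] [NormedSpace ℝ X] [NormedAddCommGroup Z]
  [NormedSpace ℝ Z] {Y : Submodule ℝ X} (s : Y →L[ℝ] Z)

noncomputable def rel : Y →L[ℝ] WithLp 1 (X × Z) :=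
  (WithLp.prodContinuousLinearEquiv 1 ℝ X Z).symm.toContinuousLinearMap ∘L Y.subtypeL.prod (-s)

lemma rel_apply (y : Y) : rel s y = WithLp.toLp 1 ((y : X), -s y) := rfl

noncomputable def relations : Submodule ℝ (WithLp 1 (X × Z)) :=
  LinearMap.range (rel s : Y →ₗ[ℝ] WithLp 1 (X × Z))

instance [CompleteSpace Y] : IsClosed (relations s : Set (WithLp 1 (X × Z))) := by
  have : AntilipschitzWith 1 (rel s) := AddMonoidHomClass.antilipschitz_of_bound _ fun y => by
    simp [rel_apply, WithLp.norm_toLp_one_prod]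
  rw [relations, LinearMap.coe_range, ContinuousLinearMap.coe_coe]
  exact this.isClosed_range (rel s).uniformContinuous

/-- The pushout of `Y ↪ X` and `s` in the category of Banach spaces and contractions:
`(X ⊕₁ Z) / {(y, -s y)}`. -/
abbrev _root_.BanachPushout : Type _ := WithLp 1 (X × Z) ⧸ relations s

noncomputable def inl : X →L[ℝ] BanachPushout s :=
  (relations s).mkQL ∘L
    (WithLp.prodContinuousLinearEquiv 1 ℝ X Z).symm.toContinuousLinearMap ∘L
      ContinuousLinearMap.inl ℝ X Z

lemma inl_apply (x : X) : inl s x = Submodule.Quotient.mk (WithLp.toLp 1 (x, 0)) := rfl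

lemma norm_inl_le_one : ‖inl s‖ ≤ 1 :=
  ContinuousLinearMap.opNorm_le_bound _ zero_le_one fun x => by
    simpa [inl_apply, WithLp.norm_toLp_one_prod] using
      Submodule.Quotient.norm_mk_le (relations s) (WithLp.toLp 1 (x, (0 : Z)))

/-- `Z` embeds isometrically because `s` is a contraction: a representative `(y, z - s y)` of the
class of `(0, z)` has norm `‖y‖ + ‖z - s y‖ ≥ ‖z‖`. -/
noncomputable def inr (hs : ∀ y, ‖s y‖ ≤ ‖y‖) : Z →ₗᵢ[ℝ] BanachPushout s where
  toLinearMap := (relations s).mkQ ∘ₗ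
    ((WithLp.linearEquiv 1 ℝ (X × Z)).symm.toLinearMap ∘ₗ LinearMap.inr ℝ X Z)
  norm_map' z := by
    refine le_antisymm ?_ (QuotientAddGroup.le_norm_iff.2 ?_)
    · simpa [WithLp.norm_toLp_one_prod] using
        Submodule.Quotient.norm_mk_le (relations s) (WithLp.toLp 1 ((0 : X), z))
    rintro m hm
    obtain ⟨y, hy⟩ : m - WithLp.toLp 1 (0, z) ∈ relations s := (Submodule.Quotient.eq _).1 hm
    have hm : m = WithLp.toLp 1 ((y : X), z - s y) := by
      rw [eq_sub_iff_add_eq] at hy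
      rw [← hy, ContinuousLinearMap.coe_coe, rel_apply, ← WithLp.toLp_add]
      simp [sub_eq_neg_add]
    calc ‖z‖ ≤ ‖y‖ + ‖z - s y‖ := by linarith [norm_le_insert' z (s y), hs y]
      _ = ‖m‖ := by rw [hm, WithLp.norm_toLp_one_prod]; rfl

lemma inl_apply_coe (hs : ∀ y, ‖s y‖ ≤ ‖y‖) (y : Y) : inl s y = inr s hs (s y) :=
  (Submodule.Quotient.eq _).2 ⟨y, by simp [rel_apply, ← WithLp.toLp_sub]⟩

instance [SeparableSpace X] [SeparableSpace Z] : SeparableSpace (BanachPushout s) :=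
  (Submodule.Quotient.mk_surjective _).denseRange.separableSpace (Submodule.mkQL _).continuous

end BanachPushout

theorem UnivDispSeparable.exists_extension_linearIsometry_comp {E : Type*}
    [NormedAddCommGroup E] [NormedSpace ℝ E] (hE : UnivDispSeparable E) {X Z : Type}
    [NormedAddCommGroup X] [NormedSpace ℝ X] [CompleteSpace X] [SeparableSpace X]
    [NormedAddCommGroup Z] [NormedSpace ℝ Z] [CompleteSpace Z] [SeparableSpace Z]
    {Y : Submodule ℝ X} [CompleteSpace Y] (s : Y →L[ℝ] Z) (hs : ∀ y, ‖s y‖ ≤ ‖y‖)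
    (u : Z →ₗᵢ[ℝ] E) : ∃ T : X →L[ℝ] E, (∀ y : Y, T y = u (s y)) ∧ ‖T‖ ≤ 1 := by
  obtain ⟨v, hv⟩ := hE Z (BanachPushout s) u (BanachPushout.inr s hs)
  refine ⟨v.toContinuousLinearMap ∘L BanachPushout.inl s, fun y => ?_, ?_⟩
  · simp [BanachPushout.inl_apply_coe s hs, hv]
  · rw [LinearIsometry.norm_toContinuousLinearMap_comp]
    exact BanachPushout.norm_inl_le_one s

theorem UnivDispSeparable.exists_extension_of_norm_le_one {E : Type*} [NormedAddCommGroup E]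
    [NormedSpace ℝ E] [CompleteSpace E] (hE : UnivDispSeparable E) {X : Type}
    [NormedAddCommGroup X] [NormedSpace ℝ X] [CompleteSpace X] [SeparableSpace X]
    {Y : Submodule ℝ X} [CompleteSpace Y] (t : Y →L[ℝ] E) (ht : ‖t‖ ≤ 1) :
    ∃ T : X →L[ℝ] E, (∀ y : Y, T y = t y) ∧ ‖T‖ ≤ 1 := by
  obtain ⟨Z, _, _, _, _, s, u, hut⟩ := t.exists_linearIsometry_comp_eq
  have hs (y : Y) : ‖s y‖ ≤ ‖y‖ := by
    simpa [← u.norm_map, hut] using t.le_of_opNorm_le ht y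
  simpa only [hut] using hE.exists_extension_linearIsometry_comp s hs u

theorem Submodule.exists_extension_norm_le_of_norm_le_one {X E : Type*}
    [NormedAddCommGroup X] [NormedSpace ℝ X] [NormedAddCommGroup E] [NormedSpace ℝ E]
    {Y : Submodule ℝ X}
    (h : ∀ s : Y →L[ℝ] E, ‖s‖ ≤ 1 → ∃ S : X →L[ℝ] E, (∀ y : Y, S y = s y) ∧ ‖S‖ ≤ 1)
    (t : Y →L[ℝ] E) : ∃ T : X →L[ℝ] E, (∀ y : Y, T y = t y) ∧ ‖T‖ ≤ ‖t‖ := by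
  rcases eq_or_ne t 0 with rfl | ht
  · exact ⟨0, fun _ => rfl, by simp only [ContinuousLinearMap.opNorm_zero, le_refl]⟩
  have ht : ‖t‖ ≠ 0 := (ContinuousLinearMap.opNorm_zero_iff t).not.2 ht
  have h_unit : ‖‖t‖⁻¹ • t‖ ≤ 1 := (ContinuousLinearMap.opNorm_smul_le _ t).trans_eq <| by
    rw [norm_inv, Real.norm_of_nonneg t.opNorm_nonneg, inv_mul_cancel₀ ht]
  obtain ⟨S, hS, hS_le⟩ := h _ h_unit
  refine ⟨‖t‖ • S, fun y => by simp [hS, smul_smul, mul_inv_cancel₀ ht], ?_⟩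
  calc ‖‖t‖ • S‖ = ‖t‖ * ‖S‖ := by rw [norm_smul, Real.norm_of_nonneg t.opNorm_nonneg]
    _ ≤ ‖t‖ := mul_le_of_le_one_right t.opNorm_nonneg hS_le

/-- Every Banach space of universal disposition for separable spaces is `1`-separably
injective: operators from closed subspaces of separable Banach spaces extend with the
same norm bound. -/
theorem oneSeparablyInjective_of_univDispSeparable
    (E : Type*) [NormedAddCommGroup E] [NormedSpace ℝ E] [CompleteSpace E]
    (hE : UnivDispSeparable E) :
    ∀ (X : Type) [NormedAddCommGroup X] [NormedSpace ℝ X] [CompleteSpace X]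
      [TopologicalSpace.SeparableSpace X]
      (Y : Submodule ℝ X), IsClosed (Y : Set X) →
      ∀ t : Y →L[ℝ] E, ∃ T : X →L[ℝ] E, (∀ y : Y, T y = t y) ∧ ‖T‖ ≤ ‖t‖ := by
  intro X _ _ _ _ Y hY t
  have : CompleteSpace Y := hY.completeSpace_coe
  exact Y.exists_extension_norm_le_of_norm_le_one
    (fun s hs => hE.exists_extension_of_norm_le_one s hs) t
end

section
/- Let X be a real Banach space, F ⊆ X a finite-dimensional subspace, and t : F → c₀ a bounded linear operator. Then t admits a compact extension with the same norm: there exists a bounded linear operator T : X → c₀ that is a compact operator, satisfies T(x) = t(x) for all x ∈ F, and ‖T‖ = ‖t‖. -/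
/-!
The coordinate functionals `evₙ ∘ t` of `t` tend to `0` pointwise on `F`, hence in norm because
`F` is finite-dimensional. Extending each of them by Hahn–Banach without increasing its norm gives
functionals `fₙ` on `X` with `‖fₙ‖ → 0`, and `x ↦ (fₙ x)ₙ` is the required extension: its norm is at
most `supₙ ‖fₙ‖ ≤ ‖t‖`, and it is compact as the norm limit of its finite-rank truncations.
-/

open scoped ZeroAtInfty
open Filter Topology

namespace ZeroAtInftyContinuousMap

variable {α β : Type*} [TopologicalSpace α] [SeminormedAddCommGroup β]

theorem norm_apply_le (f : C₀(α, β)) (x : α) : ‖f x‖ ≤ ‖f‖ :=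
  f.toBCF.norm_coe_le_norm x

theorem norm_le {f : C₀(α, β)} {C : ℝ} (hC : 0 ≤ C) : ‖f‖ ≤ C ↔ ∀ x, ‖f x‖ ≤ C :=
  BoundedContinuousFunction.norm_le (f := f.toBCF) hC

variable (𝕜 : Type*) [NontriviallyNormedField 𝕜] [NormedSpace 𝕜 β]

noncomputable def evalCLM (x : α) : C₀(α, β) →L[𝕜] β :=
  LinearMap.mkContinuous
    { toFun := fun f => f x, map_add' := fun _ _ => rfl, map_smul' := fun _ _ => rfl } 1
    fun f => by simpa using norm_apply_le f x

@[simp]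
theorem evalCLM_apply (x : α) (f : C₀(α, β)) : evalCLM 𝕜 x f = f x := rfl

theorem norm_evalCLM_le (x : α) : ‖(evalCLM 𝕜 x : C₀(α, β) →L[𝕜] β)‖ ≤ 1 :=
  LinearMap.mkContinuous_norm_le _ zero_le_one _

end ZeroAtInftyContinuousMap

namespace ContinuousLinearMap

theorem tendsto_of_forall_tendsto_apply {ι 𝕜 E F : Type*} [NontriviallyNormedField 𝕜]
    [CompleteSpace 𝕜] [NormedAddCommGroup E] [NormedSpace 𝕜 E] [FiniteDimensional 𝕜 E]
    [NormedAddCommGroup F] [NormedSpace 𝕜 F] {l : Filter ι} {s : ι → E →L[𝕜] F}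
    {u : E →L[𝕜] F} (h : ∀ x, Tendsto (fun i => s i x) l (𝓝 (u x))) : Tendsto s l (𝓝 u) := by
  set b := Module.finBasis 𝕜 E
  obtain ⟨C, -, hC⟩ := b.exists_opNorm_le (F := F)
  have hsum : Tendsto (fun i => ∑ j, ‖(s i - u) (b j)‖) l (𝓝 0) := by
    simpa using tendsto_finsetSum _ fun j _ => tendsto_iff_norm_sub_tendsto_zero.1 (h (b j))
  rw [tendsto_iff_norm_sub_tendsto_zero]
  refine squeeze_zero (fun _ => norm_nonneg _)
    (fun i => hC (Finset.sum_nonneg fun _ _ => norm_nonneg _) fun j => ?_)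
    (by simpa using hsum.const_mul C)
  exact Finset.single_le_sum (f := fun j => ‖(s i - u) (b j)‖) (fun _ _ => norm_nonneg _)
    (Finset.mem_univ j)

variable {𝕜 X E : Type*} [NontriviallyNormedField 𝕜] [NormedAddCommGroup X] [NormedSpace 𝕜 X]
  [NormedAddCommGroup E] [NormedSpace 𝕜 E]

noncomputable def c0Pi (f : ℕ → X →L[𝕜] E) (hf : Tendsto (fun n => ‖f n‖) atTop (𝓝 0)) :
    X →L[𝕜] C₀(ℕ, E) :=
  LinearMap.mkContinuousOfExistsBound
    { toFun := fun x =>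
        ⟨⟨fun n => f n x, continuous_of_discreteTopology⟩, by
          rw [cocompact_eq_atTop]
          refine squeeze_zero_norm (fun n => (f n).le_opNorm x) ?_
          simpa using hf.mul_const ‖x‖⟩
      map_add' := fun x y => by ext n; simp
      map_smul' := fun r x => by ext n; simp } <| by
    obtain ⟨C, hC⟩ := hf.bddAbove_range
    refine ⟨C, fun x => (ZeroAtInftyContinuousMap.norm_le ?_).2 fun n => ?_⟩
    · exact mul_nonneg ((norm_nonneg _).trans (hC ⟨0, rfl⟩)) (norm_nonneg x)
    · exact (f n).le_of_opNorm_le (hC ⟨n, rfl⟩) x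

@[simp]
theorem c0Pi_apply (f : ℕ → X →L[𝕜] E) (hf : Tendsto (fun n => ‖f n‖) atTop (𝓝 0)) (x : X)
    (n : ℕ) : c0Pi f hf x n = f n x :=
  rfl

theorem norm_c0Pi_le {f : ℕ → X →L[𝕜] E} {hf : Tendsto (fun n => ‖f n‖) atTop (𝓝 0)} {C : ℝ}
    (hC : ∀ n, ‖f n‖ ≤ C) : ‖c0Pi f hf‖ ≤ C := by
  have hC₀ : 0 ≤ C := (norm_nonneg _).trans (hC 0)
  refine opNorm_le_bound _ hC₀ fun x => (ZeroAtInftyContinuousMap.norm_le (by positivity)).2 ?_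
  exact fun n => (f n).le_of_opNorm_le (hC n) x

theorem norm_c0Pi_sub_le {f g : ℕ → X →L[𝕜] E} {hf : Tendsto (fun n => ‖f n‖) atTop (𝓝 0)}
    {hg : Tendsto (fun n => ‖g n‖) atTop (𝓝 0)} {C : ℝ} (hC₀ : 0 ≤ C)
    (hC : ∀ n, ‖f n - g n‖ ≤ C) : ‖c0Pi f hf - c0Pi g hg‖ ≤ C := by
  refine opNorm_le_bound _ hC₀ fun x => (ZeroAtInftyContinuousMap.norm_le (by positivity)).2 ?_
  exact fun n => by simpa using (f n - g n).le_of_opNorm_le (hC n) x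

theorem isCompactOperator_c0Pi_of_forall_ge_eq_zero [ProperSpace E]
    {f : ℕ → X →L[𝕜] E} {hf : Tendsto (fun n => ‖f n‖) atTop (𝓝 0)} {k : ℕ}
    (hk : ∀ n, k ≤ n → f n = 0) : IsCompactOperator (c0Pi f hf) := by
  let J : (Fin k → E) →L[𝕜] C₀(ℕ, E) :=
    c0Pi (fun n => if h : n < k then proj ⟨n, h⟩ else 0) <|
      tendsto_atTop_of_eventually_const (i₀ := k) fun n hn => by simp [hn.not_gt]
  have hfac : c0Pi f hf = J.comp (pi fun i : Fin k => f i) := by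
    ext x n
    by_cases hn : n < k
    · simp [J, hn]
    · simp [J, hn, hk n (not_lt.1 hn)]
  rw [hfac]
  exact (isCompactOperator_of_locallyCompactSpace_rng J).comp_clm _

theorem isCompactOperator_c0Pi [ProperSpace E] (f : ℕ → X →L[𝕜] E)
    (hf : Tendsto (fun n => ‖f n‖) atTop (𝓝 0)) : IsCompactOperator (c0Pi f hf) := by
  set g : ℕ → ℕ → X →L[𝕜] E := fun k n => if n < k then f n else 0
  have hg : ∀ k, Tendsto (fun n => ‖g k n‖) atTop (𝓝 0) := fun k =>
    tendsto_atTop_of_eventually_const (i₀ := k) fun n hn => by simp [g, hn.not_gt]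
  have hlim : Tendsto (fun k => c0Pi (g k) (hg k)) atTop (𝓝 (c0Pi f hf)) := by
    -- `rw [dist_eq_norm]` fails here: the metric on `C₀` is not reducibly the normed-group one.
    refine (Metric.tendsto_nhds (α := X →L[𝕜] C₀(ℕ, E))).2 fun ε hε => ?_
    obtain ⟨N, hN⟩ := eventually_atTop.1 (hf.eventually (gt_mem_nhds (half_pos hε)))
    filter_upwards [eventually_ge_atTop N] with k hk
    refine (dist_eq_norm' (c0Pi (g k) (hg k)) (c0Pi f hf)).trans_lt ?_
    refine (norm_c0Pi_sub_le (half_pos hε).le fun n => ?_).trans_lt (half_lt_self hε)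
    by_cases hn : n < k
    · simp [g, hn, (half_pos hε).le]
    · simpa [g, hn] using (hN n (by omega)).le
  exact isCompactOperator_of_tendsto hlim <| Eventually.of_forall fun k =>
    isCompactOperator_c0Pi_of_forall_ge_eq_zero (k := k) fun n hn => by simp [g, hn.not_gt]

end ContinuousLinearMap

open ContinuousLinearMap ZeroAtInftyContinuousMap

theorem finite_dimensional_c0_compact_extension_general
    (X : Type*) [NormedAddCommGroup X] [NormedSpace ℝ X]
    (F : Submodule ℝ X) [FiniteDimensional ℝ F]
    (t : F →L[ℝ] C₀(ℕ, ℝ)) :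
    ∃ T : X →L[ℝ] C₀(ℕ, ℝ), IsCompactOperator T ∧
      (∀ x : F, T x = t x) ∧ ‖T‖ = ‖t‖ := by
  set s : ℕ → F →L[ℝ] ℝ := fun n => (evalCLM ℝ n).comp t
  have hs : Tendsto s atTop (𝓝 0) := tendsto_of_forall_tendsto_apply fun x => by
    simpa [s, cocompact_eq_atTop] using (t x).zero_at_infty'
  choose f hf_ext hf_norm using fun n => exists_extension_norm_eq F (s n)
  have hf : Tendsto (fun n => ‖f n‖) atTop (𝓝 0) := by
    simpa [hf_norm] using (tendsto_zero_iff_norm_tendsto_zero (E := F →L[ℝ] ℝ)).1 hs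
  have hT : ∀ x : F, c0Pi f hf x = t x := fun x => by ext n; simp [hf_ext, s]
  refine ⟨c0Pi f hf, isCompactOperator_c0Pi f hf, hT, le_antisymm ?_ ?_⟩
  · refine norm_c0Pi_le fun n => (hf_norm n).trans_le ((opNorm_comp_le _ _).trans ?_)
    exact mul_le_of_le_one_left (norm_nonneg t) (norm_evalCLM_le ℝ n)
  · exact t.opNorm_le_bound (norm_nonneg (c0Pi f hf)) fun x => hT x ▸ (c0Pi f hf).le_opNorm x

/-- Every `c₀`-valued operator defined on a finite-dimensional subspace of a Banach space
admits a compact extension with the same norm: here `c₀ = C₀(ℕ, ℝ)` is the space of real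
sequences converging to `0` with the supremum norm. -/
theorem finite_dimensional_c0_compact_extension
    (X : Type*) [NormedAddCommGroup X] [NormedSpace ℝ X] [CompleteSpace X]
    (F : Submodule ℝ X) [FiniteDimensional ℝ F]
    (t : F →L[ℝ] C₀(ℕ, ℝ)) :
    ∃ T : X →L[ℝ] C₀(ℕ, ℝ), IsCompactOperator T ∧
      (∀ x : F, T x = t x) ∧ ‖T‖ = ‖t‖ :=
  finite_dimensional_c0_compact_extension_general X F t
end

section
/- A real Banach space U is of almost universal disposition for finite-dimensional spaces if and only if the following approximate extension property holds: for every pair of finite-dimensional real normed spaces A and B, every linear isometric embedding u : A → U, every linear isometric embedding ı : A → B, and every ε > 0, there exists a (1+ε)-isometric embedding u' : B → U such that ‖u(a) − u'(ı(a))‖ ≤ ε‖a‖ for all a ∈ A. -/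
/-!
For the nontrivial direction, fix a bounded left inverse `g` of `j` (it exists since `B` is
finite-dimensional) and take an approximate extension `v` for a tolerance `δ` chosen only in
terms of `ε` and `‖g‖`. The error `u - v ∘ j` is `δ`-small, so `u' := v + (u - v ∘ j) ∘ g`
extends `u` exactly and differs from `v` by at most `δ ‖g‖`, which a small enough `δ` absorbs
into the distortion `1 + ε`.
-/

/-- A real Banach space `U` is of almost universal disposition for finite-dimensional spaces
if for all finite-dimensional real normed spaces `A`, `B`, all linear isometric embeddings
`u : A → U` and `j : A → B` and every `ε > 0`, there is a `(1+ε)`-isometric embedding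
`u' : B → U` with `u' ∘ j = u`. -/
def AlmostUnivDispFinDim (U : Type*) [NormedAddCommGroup U] [NormedSpace ℝ U] : Prop :=
  ∀ (A B : Type) [NormedAddCommGroup A] [NormedSpace ℝ A] [FiniteDimensional ℝ A]
    [NormedAddCommGroup B] [NormedSpace ℝ B] [FiniteDimensional ℝ B]
    (u : A →ₗᵢ[ℝ] U) (j : A →ₗᵢ[ℝ] B) (ε : ℝ), 0 < ε →
    ∃ u' : B →ₗ[ℝ] U,
      (∀ b : B, (1 + ε)⁻¹ * ‖b‖ ≤ ‖u' b‖ ∧ ‖u' b‖ ≤ (1 + ε) * ‖b‖) ∧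
      ∀ a : A, u' (j a) = u a

def IsAlmostIsometry {E F : Type*} [SeminormedAddCommGroup E] [NormedSpace ℝ E]
    [SeminormedAddCommGroup F] [NormedSpace ℝ F] (ε : ℝ) (f : E →ₗ[ℝ] F) : Prop :=
  ∀ x : E, (1 + ε)⁻¹ * ‖x‖ ≤ ‖f x‖ ∧ ‖f x‖ ≤ (1 + ε) * ‖x‖

open Filter Topology

section

variable {A B U : Type*} [SeminormedAddCommGroup A] [NormedSpace ℝ A]
  [SeminormedAddCommGroup B] [NormedSpace ℝ B] [SeminormedAddCommGroup U] [NormedSpace ℝ U]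

theorem IsAlmostIsometry.of_norm_sub_le {δ ε η : ℝ} {f h : B →ₗ[ℝ] U}
    (hf : IsAlmostIsometry δ f) (hfh : ∀ x, ‖h x - f x‖ ≤ η * ‖x‖)
    (hlow : (1 + ε)⁻¹ + η ≤ (1 + δ)⁻¹) (hup : 1 + δ + η ≤ 1 + ε) :
    IsAlmostIsometry ε h := by
  intro x
  have hx := norm_nonneg x
  have hdist := (abs_norm_sub_norm_le (h x) (f x)).trans (hfh x)
  rw [abs_le] at hdist
  obtain ⟨hf₁, hf₂⟩ := hf x
  constructor <;> nlinarith

/-- Both inequalities are strict at `δ = 0`, hence hold for all small `δ > 0`. -/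
theorem exists_pos_perturbation_budget {ε : ℝ} (hε : 0 < ε) (c : ℝ) :
    ∃ δ > 0, (1 + ε)⁻¹ + δ * c ≤ (1 + δ)⁻¹ ∧ 1 + δ + δ * c ≤ 1 + ε := by
  have hlow : ∀ᶠ δ in 𝓝 (0 : ℝ), (1 + ε)⁻¹ + δ * c < (1 + δ)⁻¹ := by
    refine ContinuousAt.eventually_lt (by fun_prop) ?_ ?_
    · exact (continuousAt_const.add continuousAt_id).inv₀ (by norm_num)
    · simpa using inv_lt_one_of_one_lt₀ (by linarith : (1 : ℝ) < 1 + ε)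
  have hup : ∀ᶠ δ in 𝓝 (0 : ℝ), 1 + δ + δ * c < 1 + ε :=
    ContinuousAt.eventually_lt (by fun_prop) (by fun_prop) (by simpa using hε)
  obtain ⟨δ, ⟨h₁, h₂⟩, hδ⟩ :=
    ((hlow.and hup).filter_mono nhdsWithin_le_nhds |>.and self_mem_nhdsWithin).exists
      (f := 𝓝[>] (0 : ℝ))
  exact ⟨δ, hδ, h₁.le, h₂.le⟩

theorem LinearMap.exists_continuous_leftInverse_of_injective [T2Space B] [FiniteDimensional ℝ B]
    (j : A →ₗ[ℝ] B) (hj : Function.Injective j) : ∃ g : B →L[ℝ] A, ∀ a, g (j a) = a := by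
  obtain ⟨g, hg⟩ := j.exists_leftInverse_of_injective (LinearMap.ker_eq_bot.mpr hj)
  exact ⟨LinearMap.toContinuousLinearMap g, LinearMap.congr_fun hg⟩

theorem exists_extension_of_approx_extension {δ : ℝ} (hδ : 0 ≤ δ) {j : A →ₗ[ℝ] B}
    {g : B →L[ℝ] A} (hg : ∀ a, g (j a) = a) (u : A →ₗ[ℝ] U) (v : B →ₗ[ℝ] U)
    (huv : ∀ a, ‖u a - v (j a)‖ ≤ δ * ‖a‖) :
    ∃ w : B →ₗ[ℝ] U, (∀ a, w (j a) = u a) ∧ ∀ b, ‖w b - v b‖ ≤ δ * ‖g‖ * ‖b‖ := by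
  refine ⟨v + (u - v ∘ₗ j) ∘ₗ (g : B →ₗ[ℝ] A), fun a => ?_, fun b => ?_⟩
  · simp [hg]
  · calc ‖(v + (u - v ∘ₗ j) ∘ₗ (g : B →ₗ[ℝ] A)) b - v b‖ = ‖u (g b) - v (j (g b))‖ := by simp
      _ ≤ δ * ‖g b‖ := huv (g b)
      _ ≤ δ * (‖g‖ * ‖b‖) := mul_le_mul_of_nonneg_left (g.le_opNorm b) hδ
      _ = δ * ‖g‖ * ‖b‖ := (mul_assoc _ _ _).symm

end

theorem almostUnivDispFinDim_iff_approx_general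
    (U : Type*) [NormedAddCommGroup U] [NormedSpace ℝ U] :
    AlmostUnivDispFinDim U ↔
      ∀ (A B : Type) [NormedAddCommGroup A] [NormedSpace ℝ A] [FiniteDimensional ℝ A]
        [NormedAddCommGroup B] [NormedSpace ℝ B] [FiniteDimensional ℝ B]
        (u : A →ₗᵢ[ℝ] U) (j : A →ₗᵢ[ℝ] B) (ε : ℝ), 0 < ε →
        ∃ u' : B →ₗ[ℝ] U,
          (∀ b : B, (1 + ε)⁻¹ * ‖b‖ ≤ ‖u' b‖ ∧ ‖u' b‖ ≤ (1 + ε) * ‖b‖) ∧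
          ∀ a : A, ‖u a - u' (j a)‖ ≤ ε * ‖a‖ := by
  constructor
  · intro h A B _ _ _ _ _ _ u j ε hε
    obtain ⟨u', hu', hext⟩ := h A B u j ε hε
    exact ⟨u', hu', fun a => by rw [hext, sub_self, norm_zero]; positivity⟩
  · intro h A B _ _ _ _ _ _ u j ε hε
    obtain ⟨g, hg⟩ := j.toLinearMap.exists_continuous_leftInverse_of_injective j.injective
    obtain ⟨δ, hδ, hlow, hup⟩ := exists_pos_perturbation_budget hε ‖g‖
    obtain ⟨v, hv, huv⟩ := h A B u j δ hδ
    obtain ⟨u', hext, hu'v⟩ := exists_extension_of_approx_extension hδ.le hg u v huv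
    exact ⟨u', IsAlmostIsometry.of_norm_sub_le hv hu'v hlow hup, hext⟩

/-- A Banach space is of almost universal disposition for finite-dimensional spaces iff it
satisfies the approximate extension property: the extension only has to agree with `u ∘ j⁻¹`
up to `ε`. -/
theorem almostUnivDispFinDim_iff_approx
    (U : Type*) [NormedAddCommGroup U] [NormedSpace ℝ U] [CompleteSpace U] :
    AlmostUnivDispFinDim U ↔
      ∀ (A B : Type) [NormedAddCommGroup A] [NormedSpace ℝ A] [FiniteDimensional ℝ A]
        [NormedAddCommGroup B] [NormedSpace ℝ B] [FiniteDimensional ℝ B]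
        (u : A →ₗᵢ[ℝ] U) (j : A →ₗᵢ[ℝ] B) (ε : ℝ), 0 < ε →
        ∃ u' : B →ₗ[ℝ] U,
          (∀ b : B, (1 + ε)⁻¹ * ‖b‖ ≤ ‖u' b‖ ∧ ‖u' b‖ ≤ (1 + ε) * ‖b‖) ∧
          ∀ a : A, ‖u a - u' (j a)‖ ≤ ε * ‖a‖ :=
  almostUnivDispFinDim_iff_approx_general U
end
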